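/- Let 𝒮 be a measurable space, A a nonempty finite type, κ : A → Kernel 𝒮 𝒮 Markov kernels, R : 𝒮 → ℝ bounded measurable, γ ∈ [0,1), and define (𝔗V)(p) = ⨆_{a∈A} ( R(p) + γ · ∫ V(x) d(κ a p)(x) ) on bounded measurable functions. Suppose V* is a bounded measurable fixed point of 𝔗, V₀ is bounded measurable, and C ≥ 0 satisfies |V₀(p) − V*(p)| ≤ C for all p. Then for every n ∈ ℕ and all p ∈ 𝒮, |(𝔗^[n] V₀)(p) − V*(p)| ≤ γ^n · C. -/

import Mathlib

/-!
The Bellman operator `𝔗` is a `γ`-contraction for the supremum distance: a supremum over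
finitely many actions moves by at most the largest change of its terms, and integrating
against a probability measure does not increase the supremum distance. Since `V*` is a fixed
point, `|𝔗ⁿ V₀ − V*| ≤ γⁿ C` follows by induction. Along the way every iterate is measurable
and within `γⁿ C` of the bounded `V*`, hence integrable against each `κ a p`.
-/

open MeasureTheory ProbabilityTheory

lemma ciSup_le_ciSup_add_of_le_add {ι : Type*} [Finite ι] [Nonempty ι] {f g : ι → ℝ} {d : ℝ}
    (h : ∀ i, f i ≤ g i + d) : ⨆ i, f i ≤ (⨆ i, g i) + d :=
  ciSup_le fun i => (h i).trans <| by gcongr; exact le_ciSup (Finite.bddAbove_range g) i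

lemma abs_ciSup_sub_ciSup_le {ι : Type*} [Finite ι] [Nonempty ι] {f g : ι → ℝ} {d : ℝ}
    (h : ∀ i, |f i - g i| ≤ d) : |(⨆ i, f i) - ⨆ i, g i| ≤ d := by
  rw [abs_sub_le_iff, sub_le_iff_le_add', sub_le_iff_le_add']
  constructor
  · exact ciSup_le_ciSup_add_of_le_add fun i => by linarith [(abs_sub_le_iff.mp (h i)).1]
  · exact ciSup_le_ciSup_add_of_le_add fun i => by linarith [(abs_sub_le_iff.mp (h i)).2]

lemma abs_integral_le_of_abs_le {α : Type*} [MeasurableSpace α] {μ : Measure α}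
    [IsProbabilityMeasure μ] {f : α → ℝ} {C : ℝ} (h : ∀ x, |f x| ≤ C) : |∫ x, f x ∂μ| ≤ C := by
  simpa using norm_integral_le_of_norm_le_const (μ := μ) (f := f) (.of_forall h)

lemma integrable_of_abs_sub_le {α : Type*} [MeasurableSpace α] {μ : Measure α}
    [IsFiniteMeasure μ] {V W : α → ℝ} (hV : Measurable V) {D E : ℝ} (hW : ∀ x, |W x| ≤ D)
    (hVW : ∀ x, |V x - W x| ≤ E) : Integrable V μ :=
  .of_bound hV.aestronglyMeasurable (D + E) <| Filter.Eventually.of_forall fun x => by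
    rw [Real.norm_eq_abs]
    linarith [abs_sub_abs_le_abs_sub (V x) (W x), hW x, hVW x]

namespace ProbabilityTheory.Kernel

variable {𝒮 A : Type*} [MeasurableSpace 𝒮]

lemma measurable_integral_of_measurable {α β : Type*} [MeasurableSpace α] [MeasurableSpace β]
    (κ : Kernel α β) [IsSFiniteKernel κ] {V : β → ℝ} (hV : Measurable V) :
    Measurable fun p => ∫ x, V x ∂κ p :=
  StronglyMeasurable.integral_kernel_prod_right
    (f := fun _ y => V y) (hV.comp measurable_snd).stronglyMeasurable |>.measurable

noncomputable def bellman (κ : A → Kernel 𝒮 𝒮) (R : 𝒮 → ℝ) (γ : ℝ) (V : 𝒮 → ℝ) : 𝒮 → ℝ :=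
  fun p => ⨆ a, (R p + γ * ∫ x, V x ∂(κ a p))

lemma measurable_bellman [Countable A] (κ : A → Kernel 𝒮 𝒮) [∀ a, IsSFiniteKernel (κ a)]
    {R : 𝒮 → ℝ} (hR : Measurable R) (γ : ℝ) {V : 𝒮 → ℝ} (hV : Measurable V) :
    Measurable (bellman κ R γ V) :=
  Measurable.iSup fun a => hR.add ((measurable_integral_of_measurable (κ a) hV).const_mul γ)

lemma abs_bellman_sub_bellman_le [Finite A] [Nonempty A] (κ : A → Kernel 𝒮 𝒮)
    [∀ a, IsMarkovKernel (κ a)] (R : 𝒮 → ℝ) {γ : ℝ} (hγ : 0 ≤ γ) {V W : 𝒮 → ℝ}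
    (hV : ∀ a p, Integrable V (κ a p)) (hW : ∀ a p, Integrable W (κ a p)) {E : ℝ}
    (hVW : ∀ x, |V x - W x| ≤ E) (p : 𝒮) :
    |bellman κ R γ V p - bellman κ R γ W p| ≤ γ * E := by
  refine abs_ciSup_sub_ciSup_le fun a => ?_
  calc |(R p + γ * ∫ x, V x ∂(κ a p)) - (R p + γ * ∫ x, W x ∂(κ a p))|
      = γ * |∫ x, (V x - W x) ∂(κ a p)| := by
        rw [integral_sub (hV a p) (hW a p), add_sub_add_left_eq_sub, ← mul_sub, abs_mul,
          abs_of_nonneg hγ]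
    _ ≤ γ * E := by gcongr; exact abs_integral_le_of_abs_le hVW

lemma abs_bellman_sub_le_of_isFixedPt [Finite A] [Nonempty A] (κ : A → Kernel 𝒮 𝒮)
    [∀ a, IsMarkovKernel (κ a)] (R : 𝒮 → ℝ) {γ : ℝ} (hγ : 0 ≤ γ) {Vstar : 𝒮 → ℝ}
    (hfix : bellman κ R γ Vstar = Vstar) (hVstar : Measurable Vstar) {D : ℝ}
    (hVstarb : ∀ p, |Vstar p| ≤ D) {V : 𝒮 → ℝ} (hV : Measurable V) {E : ℝ}
    (hVE : ∀ p, |V p - Vstar p| ≤ E) (p : 𝒮) :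
    |bellman κ R γ V p - Vstar p| ≤ γ * E := by
  conv_lhs => rw [← hfix]
  exact abs_bellman_sub_bellman_le κ R hγ (fun a p => integrable_of_abs_sub_le hV hVstarb hVE)
    (fun a p => .of_bound hVstar.aestronglyMeasurable D (.of_forall hVstarb)) hVE p

end ProbabilityTheory.Kernel

theorem stmt_10_general {𝒮 : Type*} [MeasurableSpace 𝒮] {A : Type*} [Fintype A] [Nonempty A]
    (κ : A → Kernel 𝒮 𝒮) (hκ : ∀ a, IsMarkovKernel (κ a))
    (R : 𝒮 → ℝ) (hRm : Measurable R)
    (γ : ℝ) (hγ0 : 0 ≤ γ)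
    (T : (𝒮 → ℝ) → (𝒮 → ℝ))
    (hT : ∀ (V : 𝒮 → ℝ) (p : 𝒮), T V p = ⨆ a : A, (R p + γ * ∫ x, V x ∂(κ a p)))
    (Vstar : 𝒮 → ℝ) (hVstarm : Measurable Vstar)
    (CVstar : ℝ) (hVstarb : ∀ p, |Vstar p| ≤ CVstar)
    (hfix : T Vstar = Vstar)
    (V₀ : 𝒮 → ℝ) (hV₀m : Measurable V₀)
    (C : ℝ) (hC' : ∀ p, |V₀ p - Vstar p| ≤ C) :
    ∀ (n : ℕ) (p : 𝒮), |(T^[n] V₀) p - Vstar p| ≤ γ ^ n * C := by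
  suffices h : ∀ n, Measurable (T^[n] V₀) ∧ ∀ p, |T^[n] V₀ p - Vstar p| ≤ γ ^ n * C from
    fun n => (h n).2
  have := hκ
  obtain rfl : T = Kernel.bellman κ R γ := funext fun V => funext (hT V)
  intro n
  induction n with
  | zero => simpa using ⟨hV₀m, hC'⟩
  | succ n ih =>
    obtain ⟨hmeas, hdist⟩ := ih
    rw [Function.iterate_succ_apply', pow_succ', mul_assoc]
    exact ⟨Kernel.measurable_bellman κ hRm γ hmeas,
      Kernel.abs_bellman_sub_le_of_isFixedPt κ R hγ0 hfix hVstarm hVstarb hmeas hdist⟩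

/-- Convergence estimate of Theorem 19 (banach, after Blackwell): value iteration
`𝔗ⁿ(V₀)` converges geometrically to a bounded measurable fixed point `V*` of the
Bellman operator, `‖𝔗ⁿ(V₀) − V*‖ ≤ γⁿ‖V₀ − V*‖` in the supremum distance. -/
theorem stmt_10 {𝒮 : Type*} [MeasurableSpace 𝒮] {A : Type*} [Fintype A] [Nonempty A]
    (κ : A → Kernel 𝒮 𝒮) (hκ : ∀ a, IsMarkovKernel (κ a))
    (R : 𝒮 → ℝ) (hRm : Measurable R) (CR : ℝ) (hRb : ∀ p, |R p| ≤ CR)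
    (γ : ℝ) (hγ0 : 0 ≤ γ) (hγ1 : γ < 1)
    (T : (𝒮 → ℝ) → (𝒮 → ℝ))
    (hT : ∀ (V : 𝒮 → ℝ) (p : 𝒮), T V p = ⨆ a : A, (R p + γ * ∫ x, V x ∂(κ a p)))
    (Vstar : 𝒮 → ℝ) (hVstarm : Measurable Vstar)
    (CVstar : ℝ) (hVstarb : ∀ p, |Vstar p| ≤ CVstar)
    (hfix : T Vstar = Vstar)
    (V₀ : 𝒮 → ℝ) (hV₀m : Measurable V₀) (CV₀ : ℝ) (hV₀b : ∀ p, |V₀ p| ≤ CV₀)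
    (C : ℝ) (hC : 0 ≤ C) (hC' : ∀ p, |V₀ p - Vstar p| ≤ C) :
    ∀ (n : ℕ) (p : 𝒮), |(T^[n] V₀) p - Vstar p| ≤ γ ^ n * C :=
  stmt_10_general κ hκ R hRm γ hγ0 T hT Vstar hVstarm CVstar hVstarb hfix V₀ hV₀m C hC'
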